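/- Let G be a τ-critical graph with τ(G) = t and |V(G)| = n, and let λ₁ denote the largest eigenvalue of the adjacency matrix of G. Then n + λ₁ ≤ 2t + 1. -/

import Mathlib

open SimpleGraph

variable {V : Type*}

/-- A transversal set (vertex cover): a set of vertices incident to all edges. -/
def IsTransversal (G : SimpleGraph V) (T : Finset V) : Prop :=
  ∀ ⦃u v : V⦄, G.Adj u v → u ∈ T ∨ v ∈ T

/-- The transversal number `τ(G)`: minimum cardinality of a transversal set. -/
noncomputable def tauNum (G : SimpleGraph V) [Fintype V] : ℕ :=
  sInf {k | ∃ T : Finset V, T.card = k ∧ IsTransversal G T}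

/-- `G` is τ-critical: it has no isolated vertex and deleting any edge decreases `τ`. -/
def IsTauCritical (G : SimpleGraph V) [Fintype V] : Prop :=
  (∀ v : V, ∃ u, G.Adj v u) ∧
    ∀ e ∈ G.edgeSet, tauNum (G.deleteEdges {e}) < tauNum G

/-- `mK2 m` is the disjoint union of `m` copies of `K₂`. -/
def mK2 (m : ℕ) : SimpleGraph (Fin m × Fin 2) where
  Adj x y := x.1 = y.1 ∧ x.2 ≠ y.2
  symm := ⟨fun _ _ ⟨h1, h2⟩ => ⟨h1.symm, h2.symm⟩⟩
  loopless := ⟨fun _ ⟨_, h⟩ => h rfl⟩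

/-- The spectral radius `λ₁(G)`: the largest eigenvalue of the adjacency matrix of `G`. -/
noncomputable def specRad (G : SimpleGraph V) [Fintype V] [DecidableEq V]
    [DecidableRel G.Adj] : ℝ :=
  sSup (spectrum ℝ (G.adjMatrix ℝ))

/-- The signless Laplacian spectral radius `q₁(G)`: the largest eigenvalue of
`Q(G) = D(G) + A(G)`. -/
noncomputable def signlessLapSpecRad (G : SimpleGraph V) [Fintype V] [DecidableEq V]
    [DecidableRel G.Adj] : ℝ :=
  sSup (spectrum ℝ (Matrix.diagonal (fun v => (G.degree v : ℝ)) + G.adjMatrix ℝ))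
/-!
By Gershgorin's theorem `λ₁` is at most the maximum degree, so it suffices to show Hajnal's bound
`d(v) ≤ 2τ - n + 1` for every vertex of a τ-critical graph. For an edge `ab`, criticality gives a
transversal `S` of `G - ab` with `|S| < τ` and `a, b ∉ S`; for an independent set `A ∋ a`, replacing
`S ∩ A` by `N(A) \ S` yields a transversal of `G`, so `|S ∩ A| < |N(A) \ S|`. Induction on `|A|`
turns this into `|A| ≤ |N(A) \ N(v)| + 1` for independent `A ∋ v`, and applying that to
`A = V \ (S ∪ {b})` for an edge `vb` gives the degree bound.
-/

open Finset

section Transversal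

lemma IsTransversal.of_deleteEdge {G : SimpleGraph V} {a b : V} {S : Finset V}
    (hS : IsTransversal (G.deleteEdges {s(a, b)}) S) (hab : a ∈ S ∨ b ∈ S) :
    IsTransversal G S := by
  intro x y hxy
  by_cases he : s(x, y) = s(a, b)
  · rcases Sym2.eq_iff.mp he with ⟨rfl, rfl⟩ | ⟨rfl, rfl⟩
    · exact hab
    · exact hab.symm
  · exact hS (deleteEdges_adj.mpr ⟨hxy, by simpa using he⟩)

variable [Fintype V] {G : SimpleGraph V}

lemma exists_isTransversal_card_eq_tauNum (G : SimpleGraph V) :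
    ∃ T : Finset V, #T = tauNum G ∧ IsTransversal G T := by
  have h : tauNum G ∈ {k | ∃ T : Finset V, #T = k ∧ IsTransversal G T} :=
    Nat.sInf_mem ⟨_, univ, rfl, fun u _ _ => .inl (mem_univ u)⟩
  exact h

lemma tauNum_le_card {T : Finset V} (hT : IsTransversal G T) : tauNum G ≤ #T :=
  Nat.sInf_le ⟨T, rfl, hT⟩

/-- `S` is a transversal of `G - ab` with `|S| < τ(G)`, recorded as: `S` avoids `a` and `b`, and
`ab` is the only edge of `G` outside `S`. -/
structure IsCriticalCover (G : SimpleGraph V) (a b : V) (S : Finset V) : Prop where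
  card_lt : #S < tauNum G
  left_notMem : a ∉ S
  right_notMem : b ∉ S
  eq_of_adj : ∀ ⦃x y⦄, G.Adj x y → x ∉ S → y ∉ S → x = a ∧ y = b ∨ x = b ∧ y = a

lemma IsTauCritical.exists_isCriticalCover (hcrit : IsTauCritical G) {a b : V}
    (hab : G.Adj a b) : ∃ S, IsCriticalCover G a b S := by
  obtain ⟨S, hcard, hS⟩ := exists_isTransversal_card_eq_tauNum (G.deleteEdges {s(a, b)})
  have hlt : #S < tauNum G := hcard ▸ hcrit.2 _ (G.mem_edgeSet.mpr hab)
  have hab_notMem : ¬(a ∈ S ∨ b ∈ S) := fun h =>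
    (tauNum_le_card (hS.of_deleteEdge h)).not_gt hlt
  refine ⟨S, hlt, fun ha => hab_notMem (.inl ha), fun hb => hab_notMem (.inr hb), ?_⟩
  intro x y hxy hx hy
  by_contra hne
  refine (hS (deleteEdges_adj.mpr ⟨hxy, ?_⟩)).elim hx hy
  simpa [Sym2.eq_iff] using hne

end Transversal

namespace SimpleGraph

lemma IsIndepSet.not_adj {G : SimpleGraph V} {s : Set V} (hs : G.IsIndepSet s) {x y : V}
    (hx : x ∈ s) (hy : y ∈ s) : ¬G.Adj x y :=
  fun hxy => hs hx hy hxy.ne hxy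

variable [Fintype V] [DecidableEq V] (G : SimpleGraph V) [DecidableRel G.Adj]

def nbhd (A : Finset V) : Finset V :=
  A.biUnion fun x => G.neighborFinset x

variable {G}

@[simp]
lemma mem_nbhd {A : Finset V} {y : V} : y ∈ G.nbhd A ↔ ∃ x ∈ A, G.Adj x y := by
  simp [nbhd]

lemma nbhd_mono {A B : Finset V} (h : A ⊆ B) : G.nbhd A ⊆ G.nbhd B :=
  biUnion_subset_biUnion_of_subset_left _ h

lemma card_nbhd_sdiff_neighborFinset_lt {A : Finset V} {u v : V} (hv : v ∈ A)
    (hvu : G.Adj v u) : #(G.nbhd A \ G.neighborFinset v) < #(G.nbhd A) :=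
  card_lt_card <| (ssubset_iff_of_subset sdiff_subset).mpr
    ⟨u, mem_nbhd.mpr ⟨v, hv, hvu⟩, fun h => (mem_sdiff.mp h).2 ((G.mem_neighborFinset v u).mpr hvu)⟩

end SimpleGraph

open SimpleGraph

section CriticalCover

variable [Fintype V] [DecidableEq V] {G : SimpleGraph V} [DecidableRel G.Adj]
  {a b : V} {S A : Finset V}

lemma IsCriticalCover.isTransversal_union_nbhd_sdiff (hS : IsCriticalCover G a b S)
    (hA : G.IsIndepSet A) (ha : a ∈ A) : IsTransversal G ((S ∪ G.nbhd A) \ A) := by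
  intro x y hxy
  by_cases hx : x ∈ A
  · have hyA : y ∉ A := fun hy => hA.not_adj hx hy hxy
    exact .inr (mem_sdiff.mpr ⟨mem_union_right _ (mem_nbhd.mpr ⟨x, hx, hxy⟩), hyA⟩)
  by_cases hy : y ∈ A
  · exact .inl (mem_sdiff.mpr ⟨mem_union_right _ (mem_nbhd.mpr ⟨y, hy, hxy.symm⟩), hx⟩)
  by_cases hxS : x ∈ S
  · simp [hx, hxS]
  by_cases hyS : y ∈ S
  · simp [hy, hyS]
  rcases hS.eq_of_adj hxy hxS hyS with ⟨rfl, rfl⟩ | ⟨rfl, rfl⟩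
  · exact absurd ha hx
  · exact absurd ha hy

lemma IsCriticalCover.card_inter_lt_card_nbhd_sdiff (hS : IsCriticalCover G a b S)
    (hA : G.IsIndepSet A) (ha : a ∈ A) : #(S ∩ A) < #(G.nbhd A \ S) := by
  have hsub : (S ∪ G.nbhd A) \ A ⊆ (S \ A) ∪ (G.nbhd A \ S) := by
    intro z
    simp only [mem_sdiff, mem_union]
    tauto
  have hτ := (tauNum_le_card (hS.isTransversal_union_nbhd_sdiff hA ha)).trans
    ((card_le_card hsub).trans (card_union_le _ _))
  have := card_sdiff_add_card_inter S A
  have := hS.card_lt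
  omega

/-- The inductive step of `IsTauCritical.card_le_card_nbhd_sdiff_add_one` when some `a ∈ A \ {v}`
shares a neighbour `q` with `v`: then `a ∈ S` for a critical cover `S` of `vq`, and induction
applies to `A \ S`. -/
lemma IsCriticalCover.card_le_card_nbhd_sdiff_add_one {v q : V} (hS : IsCriticalCover G v q S)
    (hA : G.IsIndepSet A) (hv : v ∈ A) (hqA : q ∉ A)
    (ih : #(A \ S) ≤ #(G.nbhd (A \ S) \ G.neighborFinset v) + 1) :
    #A ≤ #(G.nbhd A \ G.neighborFinset v) + 1 := by
  set N := G.nbhd A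
  set Nv := G.neighborFinset v
  have hswap : #(A ∩ S) < #(N \ S) := inter_comm A S ▸ hS.card_inter_lt_card_nbhd_sdiff hA hv
  have hq : N \ S ⊆ insert q ((N \ Nv) \ S) := by
    intro z hz
    obtain ⟨hzN, hzS⟩ := mem_sdiff.mp hz
    by_cases hzv : G.Adj v z
    · rcases hS.eq_of_adj hzv hS.left_notMem hzS with ⟨-, rfl⟩ | ⟨rfl, -⟩
      · exact mem_insert_self _ _
      · exact absurd hv hqA
    · simp [hzN, hzS, Nv, hzv]
  have hinner : G.nbhd (A \ S) \ Nv ⊆ (N \ Nv) ∩ S := by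
    intro z hz
    obtain ⟨hzN, hzv⟩ := mem_sdiff.mp hz
    obtain ⟨x, hx, hxz⟩ := mem_nbhd.mp hzN
    obtain ⟨hxA, hxS⟩ := mem_sdiff.mp hx
    refine mem_inter.mpr ⟨mem_sdiff.mpr ⟨mem_nbhd.mpr ⟨x, hxA, hxz⟩, hzv⟩, ?_⟩
    by_contra hzS
    rcases hS.eq_of_adj hxz hxS hzS with ⟨rfl, -⟩ | ⟨rfl, -⟩
    · exact hzv ((G.mem_neighborFinset _ _).mpr hxz)
    · exact hqA hxA
  have := (card_le_card hq).trans (card_insert_le _ _)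
  have := card_le_card hinner
  have := card_sdiff_add_card_inter A S
  have := card_sdiff_add_card_inter (N \ Nv) S
  omega

end CriticalCover

section TauCritical

variable [Fintype V] [DecidableEq V] {G : SimpleGraph V} [DecidableRel G.Adj]

theorem IsTauCritical.card_le_card_nbhd_sdiff_add_one (hcrit : IsTauCritical G)
    {A : Finset V} (hA : G.IsIndepSet A) {v : V} (hv : v ∈ A) :
    #A ≤ #(G.nbhd A \ G.neighborFinset v) + 1 := by
  induction A using Finset.strongInduction generalizing v with
  | H A ih =>
  by_cases hcommon : ∃ a ∈ A.erase v, ∃ q, G.Adj a q ∧ G.Adj v q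
  · obtain ⟨a, ha, q, haq, hvq⟩ := hcommon
    obtain ⟨hav, haA⟩ := mem_erase.mp ha
    obtain ⟨S, hS⟩ := hcrit.exists_isCriticalCover hvq
    have haS : a ∈ S := by
      by_contra haS
      rcases hS.eq_of_adj haq haS hS.right_notMem with ⟨rfl, -⟩ | ⟨rfl, -⟩
      · exact hav rfl
      · exact haq.ne rfl
    have hssub : A \ S ⊂ A :=
      (ssubset_iff_of_subset sdiff_subset).mpr ⟨a, haA, fun h => (mem_sdiff.mp h).2 haS⟩
    exact hS.card_le_card_nbhd_sdiff_add_one hA hv (fun hq => hA.not_adj haA hq haq)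
      (ih _ hssub (hA.mono (coe_subset.mpr hssub.subset)) (mem_sdiff.mpr ⟨hv, hS.left_notMem⟩))
  · push Not at hcommon
    have hcard := card_erase_add_one hv
    rcases (A.erase v).eq_empty_or_nonempty with hempty | ⟨w, hw⟩
    · rw [hempty, card_empty] at hcard
      omega
    have hle := ih _ (erase_ssubset hv) (hA.mono (coe_subset.mpr (erase_subset v A))) hw
    obtain ⟨u, hwu⟩ := hcrit.1 w
    have hlt := card_nbhd_sdiff_neighborFinset_lt hw hwu
    have hsub : G.nbhd (A.erase v) ⊆ G.nbhd A \ G.neighborFinset v := by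
      intro z hz
      obtain ⟨a, ha, haz⟩ := mem_nbhd.mp hz
      exact mem_sdiff.mpr ⟨nbhd_mono (erase_subset v A) hz,
        fun hvz => hcommon a ha z haz ((G.mem_neighborFinset v z).mp hvz)⟩
    have := card_le_card hsub
    omega

/-- Hajnal's degree bound. A critical cover `S` of an edge `vb` leaves the independent set
`X = V \ (S ∪ {b})` containing `v`, with `N(X) ⊆ S ∪ {b}` and `b ∈ N(v)`, so Hajnal's lemma gives
`|X| ≤ |S \ N(v)| + 1`. -/
theorem IsTauCritical.degree_add_card_le (hcrit : IsTauCritical G) (v : V) :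
    G.degree v + Fintype.card V ≤ 2 * tauNum G + 1 := by
  obtain ⟨b, hvb⟩ := hcrit.1 v
  obtain ⟨S, hS⟩ := hcrit.exists_isCriticalCover hvb
  set X := (insert b S)ᶜ
  set Nv := G.neighborFinset v
  have hvX : v ∈ X := by simp [X, hvb.ne, hS.left_notMem]
  have hX : G.IsIndepSet X := by
    intro x hx y hy _ hxy
    simp only [X, coe_compl, Set.mem_compl_iff, mem_coe, mem_insert, not_or] at hx hy
    rcases hS.eq_of_adj hxy hx.2 hy.2 with ⟨-, rfl⟩ | ⟨rfl, -⟩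
    · exact hy.1 rfl
    · exact hx.1 rfl
  have hnbhd : G.nbhd X \ Nv ⊆ S \ Nv := by
    intro z hz
    obtain ⟨hzX, hzv⟩ := mem_sdiff.mp hz
    obtain ⟨x, hx, hxz⟩ := mem_nbhd.mp hzX
    refine mem_sdiff.mpr ⟨?_, hzv⟩
    simp only [X, mem_compl, mem_insert, not_or] at hx
    by_contra hzS
    rcases hS.eq_of_adj hxz hx.2 hzS with ⟨rfl, rfl⟩ | ⟨rfl, -⟩
    · exact hzv ((G.mem_neighborFinset _ _).mpr hvb)
    · exact hx.1 rfl
  have hNv : (S \ Nv) ∪ Nv ⊆ insert b S := by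
    rw [sdiff_union_self_eq_union]
    refine union_subset (subset_insert b S) fun z hz => ?_
    have hvz := (G.mem_neighborFinset v z).mp hz
    by_contra hzS
    rcases hS.eq_of_adj hvz hS.left_notMem (fun h => hzS (mem_insert_of_mem h))
      with ⟨-, rfl⟩ | ⟨rfl, -⟩
    · exact hzS (mem_insert_self _ _)
    · exact hvb.ne rfl
  have hhajnal : #X ≤ #(S \ Nv) + 1 :=
    (hcrit.card_le_card_nbhd_sdiff_add_one hX hvX).trans
      (Nat.add_le_add_right (card_le_card hnbhd) 1)
  have hdeg : #(S \ Nv) + G.degree v ≤ #S + 1 := by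
    rw [← card_neighborFinset_eq_degree, ← card_union_of_disjoint sdiff_disjoint]
    exact (card_le_card hNv).trans (card_insert_le b S)
  have hcardX : #X + (#S + 1) = Fintype.card V := by
    rw [← card_insert_of_notMem hS.right_notMem, card_compl_add_card]
  have := hS.card_lt
  omega

end TauCritical

lemma SimpleGraph.exists_abs_le_degree_of_mem_spectrum [Fintype V] [DecidableEq V]
    {G : SimpleGraph V} [DecidableRel G.Adj] {μ : ℝ} (hμ : μ ∈ spectrum ℝ (G.adjMatrix ℝ)) :
    ∃ i, |μ| ≤ G.degree i := by
  rw [← Matrix.spectrum_toLin', ← Module.End.hasEigenvalue_iff_mem_spectrum] at hμ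
  obtain ⟨i, hi⟩ := eigenvalue_mem_ball hμ
  refine ⟨i, ?_⟩
  have hrow : ∑ j ∈ univ.erase i, ‖G.adjMatrix ℝ i j‖ = G.degree i := by
    rw [sum_erase _ (by simp), ← card_neighborFinset_eq_degree, neighborFinset_eq_filter]
    simp [adjMatrix_apply, apply_ite, sum_boole]
  rw [Metric.mem_closedBall, hrow, Real.dist_eq] at hi
  simpa using hi

/-- For a τ-critical graph `G` with `τ(G) = t` and `|V(G)| = n`,
we have `n + λ₁ ≤ 2t + 1`. -/
theorem tau_critical_card_add_specRad_le (G : SimpleGraph V) [Fintype V] [DecidableEq V]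
    [DecidableRel G.Adj] (t n : ℕ) (hcrit : IsTauCritical G) (ht : tauNum G = t)
    (hn : Fintype.card V = n) :
    (n : ℝ) + specRad G ≤ 2 * t + 1 := by
  subst ht hn
  have hbound (v : V) : (G.degree v : ℝ) + Fintype.card V ≤ 2 * tauNum G + 1 := by
    exact_mod_cast hcrit.degree_add_card_le v
  have hspec : ∀ μ ∈ spectrum ℝ (G.adjMatrix ℝ), μ ≤ 2 * tauNum G + 1 - Fintype.card V := by
    intro μ hμ
    obtain ⟨i, hi⟩ := exists_abs_le_degree_of_mem_spectrum hμ
    linarith [le_abs_self μ, hbound i]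
  have hcard : (Fintype.card V : ℝ) ≤ 2 * tauNum G + 1 := by
    rcases isEmpty_or_nonempty V with hV | ⟨⟨v⟩⟩
    · simp only [Fintype.card_eq_zero, CharP.cast_eq_zero]
      positivity
    · linarith [hbound v, (G.degree v).cast_nonneg (α := ℝ)]
  have hspecRad : specRad G ≤ 2 * tauNum G + 1 - Fintype.card V :=
    Real.sSup_le hspec (by linarith)
  linarith
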